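/- arXiv:2110.12616 — 2 statements merged into one kernel-verified Lean document; each statement's English description precedes it below -/
import Mathlib

section
/- The spectral norm of the adjacency matrix of the sensitivity graph of the threshold function T_k on n bits (1 ≤ k ≤ n) equals sqrt(k · (n+1-k)). -/
open Finset

/-- Hamming weight of a Boolean string. -/
def wt {n : ℕ} (x : Fin n → Bool) : ℕ := (univ.filter (fun i => x i = true)).card

/-- The threshold function with threshold `k` on `n` bits. -/
def Tk (n k : ℕ) (x : Fin n → Bool) : Bool := decide (k ≤ wt x)

/-- Flip the `i`-th bit of `x`. -/
def flipBit {n : ℕ} (x : Fin n → Bool) (i : Fin n) : Fin n → Bool := Function.update x i (!x i)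

/-- Sensitivity of `f` at input `x`. -/
def sens {n : ℕ} (f : (Fin n → Bool) → Bool) (x : Fin n → Bool) : ℕ :=
  (univ.filter (fun i => f (flipBit x i) ≠ f x)).card

/-- Adjacency matrix of the sensitivity graph of `f`. -/
def adjMat {n : ℕ} (f : (Fin n → Bool) → Bool) : Matrix (Fin n → Bool) (Fin n → Bool) ℝ :=
  fun x y => if hammingDist x y = 1 ∧ f x ≠ f y then 1 else 0

/-- Euclidean norm of a real vector indexed by a finite type. -/
noncomputable def enorm {ι : Type*} [Fintype ι] (v : ι → ℝ) : ℝ :=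
  Real.sqrt (∑ i, v i ^ 2)

/-- Spectral norm of a real matrix, as the maximal stretch of a nonzero vector. -/
noncomputable def specNorm {ι : Type*} [Fintype ι] [DecidableEq ι] (A : Matrix ι ι ℝ) : ℝ :=
  sSup {r : ℝ | ∃ v : ι → ℝ, v ≠ 0 ∧ r = _root_.enorm (A.mulVec v) / _root_.enorm v}

/-!
In the sensitivity graph of `T_k` every edge joins a string of weight `k`, whose sensitive bits
are its `k` ones, to one of weight `k - 1`, whose sensitive bits are its `n + 1 - k` zeros. So
`d(x) d(y) = c := k (n + 1 - k)` on every edge. In any graph with this property `x ↦ √d(x)` is an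
eigenvector of the adjacency matrix `A` with eigenvalue `√c`, while Cauchy–Schwarz at each vertex
followed by double counting gives `‖A v‖² ≤ ∑_y v_y² ∑_{x ~ y} d(x) ≤ c ‖v‖²`.
-/

open Matrix

section Spectral

variable {ι : Type*} [Fintype ι]

lemma enorm_pos_of_ne_zero {v : ι → ℝ} (hv : v ≠ 0) : 0 < _root_.enorm v := by
  obtain ⟨i, hi⟩ := Function.ne_iff.mp hv
  exact Real.sqrt_pos.mpr <| (sq_pos_iff.mpr hi).trans_le <|
    single_le_sum (fun j _ => sq_nonneg (v j)) (mem_univ i)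

lemma enorm_smul_eq_abs_mul (c : ℝ) (v : ι → ℝ) :
    _root_.enorm (c • v) = |c| * _root_.enorm v := by
  simp only [_root_.enorm, Pi.smul_apply, smul_eq_mul, mul_pow, ← mul_sum,
    Real.sqrt_mul (sq_nonneg c), Real.sqrt_sq_eq_abs]

lemma enorm_le_of_sum_sq_le {u v : ι → ℝ} {c : ℝ} (hc : 0 ≤ c)
    (h : ∑ i, u i ^ 2 ≤ c * ∑ i, v i ^ 2) : _root_.enorm u ≤ √c * _root_.enorm v := by
  rw [_root_.enorm, _root_.enorm, ← Real.sqrt_mul hc]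
  exact Real.sqrt_le_sqrt h

lemma specNorm_eq_of_eigenvector [DecidableEq ι] {A : Matrix ι ι ℝ} {c : ℝ} (hc : 0 ≤ c)
    (hle : ∀ v, _root_.enorm (A *ᵥ v) ≤ c * _root_.enorm v) {v : ι → ℝ} (hv : v ≠ 0)
    (hAv : A *ᵥ v = c • v) : specNorm A = c := by
  refine IsGreatest.csSup_eq ⟨⟨v, hv, ?_⟩, ?_⟩
  · rw [hAv, enorm_smul_eq_abs_mul, abs_of_nonneg hc,
      mul_div_cancel_right₀ _ (enorm_pos_of_ne_zero hv).ne']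
  · rintro r ⟨w, hw, rfl⟩
    exact (div_le_iff₀ (enorm_pos_of_ne_zero hw)).mpr (hle w)

end Spectral

namespace SimpleGraph

variable {V : Type*} [Fintype V] (G : SimpleGraph V) [DecidableRel G.Adj]

lemma sum_sq_adjMatrix_mulVec_le {c : ℝ}
    (h : ∀ y, ∑ x ∈ G.neighborFinset y, (G.degree x : ℝ) ≤ c) (v : V → ℝ) :
    ∑ x, (G.adjMatrix ℝ *ᵥ v) x ^ 2 ≤ c * ∑ x, v x ^ 2 := by
  calc ∑ x, (G.adjMatrix ℝ *ᵥ v) x ^ 2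
      = ∑ x, (∑ y ∈ G.neighborFinset x, v y) ^ 2 := by simp only [adjMatrix_mulVec_apply]
    _ ≤ ∑ x, ∑ y ∈ G.neighborFinset x, (G.degree x : ℝ) * v y ^ 2 := by
        gcongr with x
        rw [← mul_sum, ← card_neighborFinset_eq_degree]
        exact sq_sum_le_card_mul_sum_sq
    _ = ∑ y, ∑ x ∈ G.neighborFinset y, (G.degree x : ℝ) * v y ^ 2 :=
        sum_comm' fun x y => by simp [adj_comm]
    _ ≤ ∑ y, c * v y ^ 2 := by
        gcongr with y
        rw [← sum_mul]
        exact mul_le_mul_of_nonneg_right (h y) (sq_nonneg _)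
    _ = c * ∑ x, v x ^ 2 := (mul_sum ..).symm

variable {G}

lemma sum_degree_neighborFinset_le {c : ℕ}
    (h : ∀ x y, G.Adj x y → G.degree x * G.degree y = c) (y : V) :
    ∑ x ∈ G.neighborFinset y, G.degree x ≤ c := by
  rcases (G.degree y).eq_zero_or_pos with hy | hy
  · simp [← card_neighborFinset_eq_degree, card_eq_zero.mp hy]
  · refine (Nat.eq_of_mul_eq_mul_left hy ?_).le
    rw [mul_sum, sum_congr rfl fun x hx => h y x ((mem_neighborFinset G y x).mp hx), sum_const,
      card_neighborFinset_eq_degree, smul_eq_mul]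

lemma adjMatrix_mulVec_sqrt_degree {c : ℕ}
    (h : ∀ x y, G.Adj x y → G.degree x * G.degree y = c) :
    G.adjMatrix ℝ *ᵥ (fun x => √(G.degree x)) = √c • fun x => √(G.degree x) := by
  funext x
  have hterm : ∀ y ∈ G.neighborFinset x, √(G.degree y) = √c / √(G.degree x) := by
    intro y hy
    have hxy : G.Adj x y := (mem_neighborFinset G x y).mp hy
    have hx : 0 < G.degree x := (G.degree_pos_iff_exists_adj x).mpr ⟨y, hxy⟩
    rw [eq_div_iff (by positivity), mul_comm, ← Real.sqrt_mul (Nat.cast_nonneg _), ← Nat.cast_mul,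
      h x y hxy]
  rw [adjMatrix_mulVec_apply, sum_congr rfl hterm, sum_const, card_neighborFinset_eq_degree,
    nsmul_eq_mul, Pi.smul_apply, smul_eq_mul, mul_div_assoc', mul_comm, mul_div_assoc,
    Real.div_sqrt]

theorem specNorm_adjMatrix_eq_sqrt [DecidableEq V] {c : ℕ}
    (h : ∀ x y, G.Adj x y → G.degree x * G.degree y = c) (hG : G ≠ ⊥) :
    specNorm (G.adjMatrix ℝ) = √c := by
  obtain ⟨x, y, hxy⟩ := ne_bot_iff_exists_adj.mp hG
  refine specNorm_eq_of_eigenvector (Real.sqrt_nonneg _) (fun v => ?_) ?_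
    (adjMatrix_mulVec_sqrt_degree h)
  · refine enorm_le_of_sum_sq_le (Nat.cast_nonneg _) (G.sum_sq_adjMatrix_mulVec_le (fun y => ?_) v)
    exact_mod_cast sum_degree_neighborFinset_le h y
  · refine Function.ne_iff.mpr ⟨x, ?_⟩
    have := (G.degree_pos_iff_exists_adj x).mpr ⟨y, hxy⟩
    positivity

end SimpleGraph

section FlipBit

variable {n : ℕ} (x : Fin n → Bool) (i : Fin n)

lemma flipBit_injective : Function.Injective (flipBit x) := by
  intro i j h
  by_contra hij
  simpa [flipBit, Function.update_of_ne hij] using congrFun h i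

lemma flipBit_apply_self : flipBit x i i = !x i := Function.update_self ..

lemma flipBit_apply_of_ne {i j : Fin n} (h : j ≠ i) : flipBit x i j = x j :=
  Function.update_of_ne h ..

lemma hammingDist_flipBit : hammingDist x (flipBit x i) = 1 := by
  rw [hammingDist, card_eq_one]
  refine ⟨i, eq_singleton_iff_unique_mem.mpr ⟨by simp [flipBit_apply_self], fun j hj => ?_⟩⟩
  by_contra hji
  simp [flipBit_apply_of_ne x hji] at hj

lemma hammingDist_eq_one_iff {y : Fin n → Bool} : hammingDist x y = 1 ↔ ∃ i, y = flipBit x i := by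
  refine ⟨fun h => ?_, fun ⟨i, hi⟩ => hi ▸ hammingDist_flipBit x i⟩
  obtain ⟨i, hi⟩ := card_eq_one.mp h
  have hdiff (j : Fin n) : x j ≠ y j ↔ j = i := by simpa using congrArg (j ∈ ·) hi
  refine ⟨i, funext fun j => ?_⟩
  by_cases hji : j = i
  · rw [hji, flipBit_apply_self]
    exact Bool.eq_not.mpr (Ne.symm ((hdiff i).mpr rfl))
  · rw [flipBit_apply_of_ne x hji]
    exact (not_not.mp (mt (hdiff j).mp hji)).symm

lemma wt_flipBit_of_true (h : x i = true) : wt (flipBit x i) + 1 = wt x := by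
  have : (univ.filter fun j => flipBit x i j = true) =
      (univ.filter fun j => x j = true).erase i := by
    ext j
    by_cases hji : j = i
    · simp [hji, flipBit_apply_self, h]
    · simp [hji, flipBit_apply_of_ne x hji]
  rw [wt, wt, this, card_erase_add_one (by simpa using h)]

lemma wt_flipBit_of_false (h : x i = false) : wt (flipBit x i) = wt x + 1 := by
  have : (univ.filter fun j => flipBit x i j = true) =
      insert i (univ.filter fun j => x j = true) := by
    ext j
    by_cases hji : j = i
    · simp [hji, flipBit_apply_self, h]
    · simp [hji, flipBit_apply_of_ne x hji]
  rw [wt, wt, this, card_insert_of_notMem (by simpa using h)]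

end FlipBit

def sensGraph {n : ℕ} (f : (Fin n → Bool) → Bool) : SimpleGraph (Fin n → Bool) where
  Adj x y := hammingDist x y = 1 ∧ f x ≠ f y
  symm := ⟨fun _ _ h => ⟨by rw [hammingDist_comm, h.1], h.2.symm⟩⟩
  loopless := ⟨fun _ h => h.2 rfl⟩

instance {n : ℕ} (f : (Fin n → Bool) → Bool) : DecidableRel (sensGraph f).Adj :=
  fun x y => inferInstanceAs (Decidable (hammingDist x y = 1 ∧ f x ≠ f y))

@[simp]
lemma sensGraph_adj {n : ℕ} {f : (Fin n → Bool) → Bool} {x y : Fin n → Bool} :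
    (sensGraph f).Adj x y ↔ hammingDist x y = 1 ∧ f x ≠ f y := Iff.rfl

lemma adjMat_eq_adjMatrix {n : ℕ} (f : (Fin n → Bool) → Bool) :
    adjMat f = (sensGraph f).adjMatrix ℝ := by
  ext x y
  rw [SimpleGraph.adjMatrix_apply]
  rfl

lemma neighborFinset_sensGraph {n : ℕ} (f : (Fin n → Bool) → Bool) (x : Fin n → Bool) :
    (sensGraph f).neighborFinset x =
      (univ.filter fun i => f (flipBit x i) ≠ f x).image (flipBit x) := by
  ext y
  simp only [SimpleGraph.mem_neighborFinset, sensGraph_adj, hammingDist_eq_one_iff, mem_image,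
    mem_filter, mem_univ, true_and]
  constructor
  · rintro ⟨⟨i, rfl⟩, h⟩
    exact ⟨i, Ne.symm h, rfl⟩
  · rintro ⟨i, h, rfl⟩
    exact ⟨⟨i, rfl⟩, Ne.symm h⟩

lemma degree_sensGraph {n : ℕ} (f : (Fin n → Bool) → Bool) (x : Fin n → Bool) :
    (sensGraph f).degree x = sens f x := by
  rw [← SimpleGraph.card_neighborFinset_eq_degree, neighborFinset_sensGraph,
    card_image_of_injective _ (flipBit_injective x), sens]

section Threshold

variable {n k : ℕ}

lemma Tk_flipBit_ne_iff (x : Fin n → Bool) (i : Fin n) :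
    Tk n k (flipBit x i) ≠ Tk n k x ↔ (x i = true ∧ wt x = k) ∨ (x i = false ∧ wt x + 1 = k) := by
  simp only [Tk, ne_eq, decide_eq_decide]
  cases hxi : x i
  · rw [wt_flipBit_of_false x i hxi]
    simp only [Bool.false_eq_true, false_and, true_and, false_or]
    omega
  · have := wt_flipBit_of_true x i hxi
    simp only [true_and, Bool.true_eq_false, false_and, or_false]
    omega

lemma sens_Tk_of_wt_eq {x : Fin n → Bool} (h : wt x = k) : sens (Tk n k) x = k := by
  subst h
  have : (univ.filter fun i => Tk n (wt x) (flipBit x i) ≠ Tk n (wt x) x) =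
      univ.filter fun i => x i = true := by
    ext i
    simp [Tk_flipBit_ne_iff]
  rw [sens, this, wt]

lemma sens_Tk_of_wt_add_one_eq {x : Fin n → Bool} (h : wt x + 1 = k) :
    sens (Tk n k) x = n + 1 - k := by
  subst h
  have : (univ.filter fun i => Tk n (wt x + 1) (flipBit x i) ≠ Tk n (wt x + 1) x) =
      univ.filter fun i => ¬x i = true := by
    ext i
    simp [Tk_flipBit_ne_iff]
  have hsplit : wt x + #(univ.filter fun i => ¬x i = true) = n := by
    simpa [wt] using card_filter_add_card_filter_not (s := univ) (p := fun i => x i = true)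
  rw [sens, this]
  omega

lemma degree_mul_degree_sensGraph_Tk {x y : Fin n → Bool} (hxy : (sensGraph (Tk n k)).Adj x y) :
    (sensGraph (Tk n k)).degree x * (sensGraph (Tk n k)).degree y = k * (n + 1 - k) := by
  obtain ⟨⟨i, rfl⟩, hne⟩ := (sensGraph_adj.mp hxy).imp_left (hammingDist_eq_one_iff x).mp
  simp only [degree_sensGraph]
  rcases (Tk_flipBit_ne_iff x i).mp (Ne.symm hne) with ⟨hxi, hwt⟩ | ⟨hxi, hwt⟩
  · rw [sens_Tk_of_wt_eq hwt, sens_Tk_of_wt_add_one_eq (by rw [wt_flipBit_of_true x i hxi, hwt])]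
  · rw [sens_Tk_of_wt_add_one_eq hwt, sens_Tk_of_wt_eq (by rw [wt_flipBit_of_false x i hxi, hwt]),
      mul_comm]

lemma exists_wt_eq (hkn : k ≤ n) : ∃ x : Fin n → Bool, wt x = k := by
  obtain ⟨s, -, hs⟩ := exists_subset_card_eq (s := (univ : Finset (Fin n))) (by simpa using hkn)
  exact ⟨fun i => decide (i ∈ s), by simp [wt, hs]⟩

lemma sensGraph_Tk_ne_bot (hk1 : 1 ≤ k) (hkn : k ≤ n) : sensGraph (Tk n k) ≠ ⊥ := by
  obtain ⟨x, hx⟩ := exists_wt_eq hkn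
  obtain ⟨i, hi⟩ := card_pos.mp (hx ▸ hk1 : 0 < wt x)
  exact SimpleGraph.ne_bot_iff_exists_adj.mpr ⟨x, flipBit x i, hammingDist_flipBit x i,
    Ne.symm ((Tk_flipBit_ne_iff x i).mpr (Or.inl ⟨(mem_filter.mp hi).2, hx⟩))⟩

end Threshold

theorem specNorm_threshold_eq (n k : ℕ) (hk1 : 1 ≤ k) (hkn : k ≤ n) :
    specNorm (adjMat (Tk n k)) = Real.sqrt ((k : ℝ) * ((n : ℝ) + 1 - k)) := by
  have hc : ((k * (n + 1 - k) : ℕ) : ℝ) = k * (n + 1 - k) := by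
    push_cast [Nat.cast_sub (by omega : k ≤ n + 1)]
    ring
  rw [adjMat_eq_adjMatrix, SimpleGraph.specNorm_adjMatrix_eq_sqrt
    (fun _ _ => degree_mul_degree_sensGraph_Tk) (sensGraph_Tk_ne_bot hk1 hkn), hc]
end

section
/- With the weight scheme w of the previous statement for a symmetric non-constant f with parameter t = t_f ≤ n/2, every input x satisfies Σ_{i ∈ [n]} w(x,i) ≤ C · sqrt(t · n) for an absolute constant C (e.g., C = 3); hence the min-max adversary quantity MM(f) = O(sqrt(t_f · n)). -/
open Finset

/-- The min-max (dual adversary) quantity `MM(f)`. -/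
noncomputable def MMval {n : ℕ} (f : (Fin n → Bool) → Bool) : ℝ :=
  sInf {r : ℝ | ∃ w : (Fin n → Bool) → Fin n → ℝ,
    (∀ x i, 0 ≤ w x i) ∧
    (∀ x y : Fin n → Bool, f x ≠ f y →
      1 ≤ ∑ i ∈ univ.filter (fun i => x i ≠ y i), Real.sqrt (w x i * w y i)) ∧
    (∀ x, ∑ i, w x i ≤ r)}

/-!
Light inputs (`wt x < t`) carry total weight at most `t √(n/t) + n √(t/n) = 2 √(tn)`, middle
inputs `2t √(n/t) = 2 √(tn)`; heavy inputs are light ones with all bits complemented.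

Two inputs on which `f` differs cannot both lie in the middle band, where `f` is constant, so up
to symmetry and complementation the first one is light. If the second is light or middle, some
differing coordinate carries `√(n/t)` on one side and `√(t/n)` on the other, contributing `1`.
If it is heavy, the two inputs differ in at least `n - 2t + 2` coordinates that are zeros of the
light and ones of the heavy input, each contributing `√(t/n)`, and `(n - 2t + 2)² t ≥ n`.
-/

namespace Real

theorem sqrt_div_mul_sqrt_div_cancel {p q : ℝ} (hp : 0 < p) (hq : 0 < q) :
    √(p / q) * √(q / p) = 1 := by
  rw [← sqrt_mul (div_nonneg hp.le hq.le), div_mul_div_comm, mul_comm q, div_self (by positivity),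
    sqrt_one]

theorem mul_sqrt_div_self {p : ℝ} (hp : 0 ≤ p) (q : ℝ) : p * √(q / p) = √(p * q) := by
  rcases hp.eq_or_lt with rfl | hp
  · simp
  rw [← sqrt_sq hp.le, ← sqrt_mul (sq_nonneg p), sqrt_sq hp.le]
  congr 1
  field_simp

theorem one_le_mul_sqrt_div {k t n : ℕ} (ht : 1 ≤ t) (htn : 2 * t ≤ n)
    (hk : n + 2 ≤ k + 2 * t) :
    1 ≤ k * √((t : ℝ) / n) := by
  have hn : (0 : ℝ) < n := by norm_cast; omega
  have hkt : n ≤ k ^ 2 * t := by nlinarith [Nat.mul_le_mul_left k (show 1 ≤ k by omega)]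
  rw [← sqrt_sq (Nat.cast_nonneg k), ← sqrt_mul (sq_nonneg _), one_le_sqrt, ← mul_div_assoc,
    one_le_div hn]
  exact_mod_cast hkt

end Real

section Weight

variable {n : ℕ}

theorem wt_add_wt_compl (x : Fin n → Bool) : wt x + wt xᶜ = n := by
  simpa [wt] using card_filter_add_card_filter_not (s := univ) (fun i => x i = true)

theorem wt_le_wt_add_card_filter (x y : Fin n → Bool) :
    wt y ≤ wt x + #{i | x i = false ∧ y i = true} := by
  refine (card_le_card fun i hi => ?_).trans (card_union_le _ _)
  cases hx : x i <;> simp_all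

theorem sum_ite_le_wt_mul_add (x : Fin n → Bool) {p q : ℝ} (hq : 0 ≤ q) :
    (∑ i, if x i then p else q) ≤ wt x * p + n * q := by
  rw [sum_ite, sum_const, sum_const, nsmul_eq_mul, nsmul_eq_mul]
  exact add_le_add le_rfl (mul_le_mul_of_nonneg_right
    (by exact_mod_cast (card_filter_le _ _).trans_eq (card_fin n)) hq)

end Weight

/-- The left-hand side of the constraint of `MMval` for the pair `x, y`. -/
noncomputable def crossWeight {n : ℕ} (w : (Fin n → Bool) → Fin n → ℝ) (x y : Fin n → Bool) :
    ℝ :=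
  ∑ i ∈ univ.filter (fun i => x i ≠ y i), √(w x i * w y i)

section CrossWeight

variable {n : ℕ} (w : (Fin n → Bool) → Fin n → ℝ)

theorem crossWeight_comm (x y : Fin n → Bool) : crossWeight w x y = crossWeight w y x := by
  simp only [crossWeight, ne_comm (a := x _), mul_comm (w x _)]

theorem crossWeight_compl (x y : Fin n → Bool) :
    crossWeight (fun z => w zᶜ) xᶜ yᶜ = crossWeight w x y := by
  simp [crossWeight]

variable {w}

theorem sqrt_mul_le_crossWeight {x y : Fin n → Bool} {i : Fin n} (hi : x i ≠ y i) :
    √(w x i * w y i) ≤ crossWeight w x y :=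
  single_le_sum (f := fun j => √(w x j * w y j)) (fun _ _ => Real.sqrt_nonneg _)
    (mem_filter.mpr ⟨mem_univ i, hi⟩)

theorem MMval_le {f : (Fin n → Bool) → Bool} {r : ℝ} (hw : ∀ x i, 0 ≤ w x i)
    (hcross : ∀ x y, f x ≠ f y → 1 ≤ crossWeight w x y) (hsum : ∀ x, ∑ i, w x i ≤ r) :
    MMval f ≤ r := by
  refine csInf_le ⟨0, fun r ⟨w', hw', _, hsum'⟩ => ?_⟩ ⟨w, hw, hcross, hsum⟩
  exact (sum_nonneg fun i _ => hw' 0 i).trans (hsum' 0)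

end CrossWeight

structure IsThresholdScheme (n t : ℕ) (w : (Fin n → Bool) → Fin n → ℝ) : Prop where
  of_wt_lt : ∀ x, wt x < t → ∀ i, w x i =
    if x i then √((n : ℝ) / t) else √((t : ℝ) / n)
  of_lt_wt : ∀ x, n - t < wt x → ∀ i, w x i =
    if x i then √((t : ℝ) / n) else √((n : ℝ) / t)
  of_mid : ∀ x, t ≤ wt x → wt x ≤ n - t →
    ∃ S1 S0 : Finset (Fin n), S1.card = t ∧ S0.card = t ∧
      (∀ i ∈ S1, x i = true) ∧ (∀ i ∈ S0, x i = false) ∧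
      (∀ i, w x i = if i ∈ S1 ∪ S0 then √((n : ℝ) / t) else 0)

namespace IsThresholdScheme

variable {n t : ℕ} {w : (Fin n → Bool) → Fin n → ℝ}

theorem compl (hw : IsThresholdScheme n t w) (htn : t ≤ n) :
    IsThresholdScheme n t (fun x => w xᶜ) where
  of_wt_lt x hx i := by
    have := wt_add_wt_compl x
    rw [hw.of_lt_wt xᶜ (by omega) i, Pi.compl_apply]
    cases x i <;> rfl
  of_lt_wt x hx i := by
    have := wt_add_wt_compl x
    rw [hw.of_wt_lt xᶜ (by omega) i, Pi.compl_apply]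
    cases x i <;> rfl
  of_mid x hx hx' := by
    have := wt_add_wt_compl x
    obtain ⟨S1, S0, h1, h0, hS1, hS0, hwx⟩ := hw.of_mid xᶜ (by omega) (by omega)
    refine ⟨S0, S1, h0, h1, fun i hi => ?_, fun i hi => ?_, fun i => ?_⟩
    · simpa using hS0 i hi
    · simpa using hS1 i hi
    · rw [hwx, union_comm]

theorem nonneg (hw : IsThresholdScheme n t w) (x : Fin n → Bool) (i : Fin n) : 0 ≤ w x i := by
  by_cases hx : wt x < t
  · rw [hw.of_wt_lt x hx]; split_ifs <;> positivity
  by_cases hx' : n - t < wt x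
  · rw [hw.of_lt_wt x hx']; split_ifs <;> positivity
  obtain ⟨S1, S0, -, -, -, -, hwx⟩ := hw.of_mid x (not_lt.mp hx) (not_lt.mp hx')
  rw [hwx]; split_ifs <;> positivity

theorem sum_le_of_wt_lt (hw : IsThresholdScheme n t w) {x : Fin n → Bool} (hx : wt x < t) :
    ∑ i, w x i ≤ 2 * √((t : ℝ) * n) := by
  rw [sum_congr rfl fun i _ => hw.of_wt_lt x hx i]
  calc _ ≤ wt x * √((n : ℝ) / t) + n * √((t : ℝ) / n) :=
        sum_ite_le_wt_mul_add x (Real.sqrt_nonneg _)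
    _ ≤ t * √((n : ℝ) / t) + n * √((t : ℝ) / n) := by gcongr
    _ = 2 * √((t : ℝ) * n) := by
      rw [Real.mul_sqrt_div_self (Nat.cast_nonneg _), Real.mul_sqrt_div_self (Nat.cast_nonneg _),
        mul_comm (n : ℝ)]
      ring

theorem sum_le_of_mid (hw : IsThresholdScheme n t w) {x : Fin n → Bool} (hx : t ≤ wt x)
    (hx' : wt x ≤ n - t) : ∑ i, w x i ≤ 2 * √((t : ℝ) * n) := by
  obtain ⟨S1, S0, h1, h0, -, -, hwx⟩ := hw.of_mid x hx hx'
  rw [sum_congr rfl fun i _ => hwx i, sum_ite_mem, univ_inter, sum_const, nsmul_eq_mul,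
    ← Real.mul_sqrt_div_self (Nat.cast_nonneg _), ← mul_assoc]
  gcongr
  exact_mod_cast (card_union_le S1 S0).trans_eq (by omega)

theorem sum_le (hw : IsThresholdScheme n t w) (htn : t ≤ n) (x : Fin n → Bool) :
    ∑ i, w x i ≤ 2 * √((t : ℝ) * n) := by
  by_cases hx : wt x < t
  · exact hw.sum_le_of_wt_lt hx
  by_cases hx' : n - t < wt x
  · have := wt_add_wt_compl x
    simpa using (hw.compl htn).sum_le_of_wt_lt (x := xᶜ) (by omega)
  exact hw.sum_le_of_mid (not_lt.mp hx) (not_lt.mp hx')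

theorem one_le_crossWeight_of_wt_lt_of_lt_wt (hw : IsThresholdScheme n t w) (htn : 2 * t ≤ n)
    {x y : Fin n → Bool} (hx : wt x < t) (hy : n - t < wt y) : 1 ≤ crossWeight w x y := by
  have hD : n + 2 ≤ #{i | x i = false ∧ y i = true} + 2 * t := by
    have := wt_le_wt_add_card_filter x y
    have := wt_add_wt_compl y
    omega
  set D := univ.filter fun i => x i = false ∧ y i = true
  have hterm : ∀ i ∈ D, √(w x i * w y i) = √((t : ℝ) / n) := fun i hi => by
    obtain ⟨hxi, hyi⟩ := (mem_filter.mp hi).2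
    rw [hw.of_wt_lt x hx, hw.of_lt_wt y hy, hxi, hyi, if_neg Bool.false_ne_true, if_pos rfl,
      Real.sqrt_mul_self (Real.sqrt_nonneg _)]
  have hDsub : D ⊆ univ.filter fun i => x i ≠ y i := fun i hi => by
    obtain ⟨hxi, hyi⟩ := (mem_filter.mp hi).2
    simp [hxi, hyi]
  calc (1 : ℝ) ≤ #D * √((t : ℝ) / n) := Real.one_le_mul_sqrt_div (by omega) htn hD
    _ = ∑ i ∈ D, √(w x i * w y i) := by rw [sum_congr rfl hterm, sum_const, nsmul_eq_mul]
    _ ≤ crossWeight w x y := sum_le_sum_of_subset_of_nonneg hDsub fun _ _ _ => Real.sqrt_nonneg _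

theorem one_le_crossWeight_of_wt_lt (hw : IsThresholdScheme n t w) (htn : 2 * t ≤ n)
    {x y : Fin n → Bool} (hx : wt x < t) (hxy : x ≠ y) : 1 ≤ crossWeight w x y := by
  have hcancel := Real.sqrt_div_mul_sqrt_div_cancel (p := n) (q := t) (by norm_cast; omega)
    (by norm_cast; omega)
  by_cases hy : wt y < t
  · obtain ⟨i, hi⟩ := Function.ne_iff.mp hxy
    refine le_trans ?_ (sqrt_mul_le_crossWeight hi)
    rw [hw.of_wt_lt x hx, hw.of_wt_lt y hy]
    cases hxi : x i <;> cases hyi : y i <;> simp_all [mul_comm]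
  by_cases hy' : n - t < wt y
  · exact hw.one_le_crossWeight_of_wt_lt_of_lt_wt htn hx hy'
  obtain ⟨S1, S0, h1, -, hS1, -, hwy⟩ := hw.of_mid y (not_lt.mp hy) (not_lt.mp hy')
  obtain ⟨i, hiS1, hix⟩ := exists_mem_notMem_of_card_lt_card
    (s := univ.filter fun i => x i = true) (t := S1) (h1 ▸ hx)
  have hxi : x i = false := by simpa using hix
  refine le_trans ?_ (sqrt_mul_le_crossWeight (i := i) (by simp [hxi, hS1 i hiS1]))
  rw [hw.of_wt_lt x hx, hwy, if_pos (mem_union_left _ hiS1), hxi, if_neg Bool.false_ne_true,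
    mul_comm, hcancel, Real.sqrt_one]

theorem one_le_crossWeight_of_lt_wt (hw : IsThresholdScheme n t w) (htn : 2 * t ≤ n)
    {x y : Fin n → Bool} (hx : n - t < wt x) (hxy : x ≠ y) : 1 ≤ crossWeight w x y := by
  have := wt_add_wt_compl x
  rw [← crossWeight_compl]
  exact (hw.compl (by omega)).one_le_crossWeight_of_wt_lt htn (by omega) (by simpa using hxy)

theorem one_le_crossWeight (hw : IsThresholdScheme n t w) (htn : 2 * t ≤ n)
    {f : (Fin n → Bool) → Bool}
    (hf : ∀ x y, t ≤ wt x → wt x ≤ n - t → t ≤ wt y → wt y ≤ n - t → f x = f y)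
    {x y : Fin n → Bool} (hxy : f x ≠ f y) : 1 ≤ crossWeight w x y := by
  have hne : x ≠ y := ne_of_apply_ne f hxy
  by_cases hx : wt x < t
  · exact hw.one_le_crossWeight_of_wt_lt htn hx hne
  by_cases hx' : n - t < wt x
  · exact hw.one_le_crossWeight_of_lt_wt htn hx' hne
  rw [crossWeight_comm]
  by_cases hy : wt y < t
  · exact hw.one_le_crossWeight_of_wt_lt htn hy hne.symm
  by_cases hy' : n - t < wt y
  · exact hw.one_le_crossWeight_of_lt_wt htn hy' hne.symm
  exact absurd (hf x y (not_lt.mp hx) (not_lt.mp hx') (not_lt.mp hy) (not_lt.mp hy')) hxy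

end IsThresholdScheme

theorem weight_scheme_sum_bound_general (n t : ℕ) (htn : 2 * t ≤ n)
    (g : ℕ → Bool) (f : (Fin n → Bool) → Bool) (hf : ∀ x, f x = g (wt x))
    (ht : IsLeast {s : ℕ | ∀ a b : ℕ, s ≤ a → a ≤ n - s → s ≤ b → b ≤ n - s → g a = g b} t)
    (w : (Fin n → Bool) → Fin n → ℝ)
    (hleft : ∀ x, wt x < t → ∀ i, w x i =
      if x i then Real.sqrt ((n : ℝ) / t) else Real.sqrt ((t : ℝ) / n))
    (hright : ∀ x, n - t < wt x → ∀ i, w x i =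
      if x i then Real.sqrt ((t : ℝ) / n) else Real.sqrt ((n : ℝ) / t))
    (hmid : ∀ x, t ≤ wt x → wt x ≤ n - t →
      ∃ S1 S0 : Finset (Fin n), S1.card = t ∧ S0.card = t ∧
        (∀ i ∈ S1, x i = true) ∧ (∀ i ∈ S0, x i = false) ∧
        (∀ i, w x i = if i ∈ S1 ∪ S0 then Real.sqrt ((n : ℝ) / t) else 0)) :
    (∀ x : Fin n → Bool, ∑ i, w x i ≤ 3 * Real.sqrt ((t : ℝ) * n)) ∧
    MMval f ≤ 3 * Real.sqrt ((t : ℝ) * n) := by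
  have hw : IsThresholdScheme n t w := ⟨hleft, hright, hmid⟩
  have hsum (x : Fin n → Bool) : ∑ i, w x i ≤ 3 * √((t : ℝ) * n) :=
    (hw.sum_le (by omega) x).trans (by linarith [Real.sqrt_nonneg ((t : ℝ) * n)])
  have hmid_const (x y : Fin n → Bool) (hx : t ≤ wt x) (hx' : wt x ≤ n - t) (hy : t ≤ wt y)
      (hy' : wt y ≤ n - t) : f x = f y := by
    rw [hf, hf]
    exact ht.1 _ _ hx hx' hy hy'
  exact ⟨hsum, MMval_le hw.nonneg (fun x y => hw.one_le_crossWeight htn hmid_const) hsum⟩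

theorem weight_scheme_sum_bound (n t : ℕ) (hn : 2 ≤ n) (htn : 2 * t ≤ n)
    (g : ℕ → Bool) (f : (Fin n → Bool) → Bool) (hf : ∀ x, f x = g (wt x))
    (hnc : ∃ x y : Fin n → Bool, f x ≠ f y)
    (ht : IsLeast {s : ℕ | ∀ a b : ℕ, s ≤ a → a ≤ n - s → s ≤ b → b ≤ n - s → g a = g b} t)
    (w : (Fin n → Bool) → Fin n → ℝ)
    (hleft : ∀ x, wt x < t → ∀ i, w x i =
      if x i then Real.sqrt ((n : ℝ) / t) else Real.sqrt ((t : ℝ) / n))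
    (hright : ∀ x, n - t < wt x → ∀ i, w x i =
      if x i then Real.sqrt ((t : ℝ) / n) else Real.sqrt ((n : ℝ) / t))
    (hmid : ∀ x, t ≤ wt x → wt x ≤ n - t →
      ∃ S1 S0 : Finset (Fin n), S1.card = t ∧ S0.card = t ∧
        (∀ i ∈ S1, x i = true) ∧ (∀ i ∈ S0, x i = false) ∧
        (∀ i, w x i = if i ∈ S1 ∪ S0 then Real.sqrt ((n : ℝ) / t) else 0)) :
    (∀ x : Fin n → Bool, ∑ i, w x i ≤ 3 * Real.sqrt ((t : ℝ) * n)) ∧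
    MMval f ≤ 3 * Real.sqrt ((t : ℝ) * n) :=
  weight_scheme_sum_bound_general n t htn g f hf ht w hleft hright hmid
end
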